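/- Let a, b be messages with src(a) ≠ src(b). For every peer i and every shuffle τ of the two-letter words !a·?a and !b·?b, the projection of τ onto the actions of peer i equals either the projection of !a·?a·!b·?b onto peer i, or the projection of !b·?b·!a·?a onto peer i. -/
import Mathlib


/-! Communicating finite state machines: messages, traces, systems. -/

structure MessageSet where
  msgs : Finset ℕ
  p : ℕ
  src : ℕ → ℕ
  dst : ℕ → ℕ

def MessageSet.WF (M : MessageSet) : Prop :=
  1 ≤ M.p ∧ ∀ a ∈ M.msgs, M.src a ≠ M.dst a ∧ M.src a < M.p ∧ M.dst a < M.p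

inductive Act where
  | send (a : ℕ)
  | recv (a : ℕ)
deriving DecidableEq

abbrev Trace := List Act

def Act.msg : Act → ℕ
  | .send a => a
  | .recv a => a

def peerOf (M : MessageSet) : Act → ℕ
  | .send a => M.src a
  | .recv a => M.dst a

/-- Send projection: the sequence of messages sent in a trace. -/
def sendProj (τ : Trace) : List ℕ :=
  τ.filterMap (fun α => match α with | .send a => some a | .recv _ => none)

/-- Projection of a trace on the actions of peer `i`. -/
def projPeer (M : MessageSet) (i : ℕ) (τ : Trace) : Trace :=
  τ.filter (fun α => peerOf M α = i)

def sentOn (M : MessageSet) (i j : ℕ) (τ : Trace) : List ℕ :=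
  τ.filterMap (fun α => match α with
    | .send a => if M.src a = i ∧ M.dst a = j then some a else none
    | .recv _ => none)

def recvOn (M : MessageSet) (i j : ℕ) (τ : Trace) : List ℕ :=
  τ.filterMap (fun α => match α with
    | .recv a => if M.src a = i ∧ M.dst a = j then some a else none
    | .send _ => none)

/-- A trace is FIFO if on every channel, in every prefix, the receives form a
prefix of the sends. -/
def Fifo (M : MessageSet) (τ : Trace) : Prop :=
  ∀ τ', τ' <+: τ → ∀ i j, recvOn M i j τ' <+: sentOn M i j τ'

/-- `k`-bounded FIFO trace: the buffer of each channel never exceeds `k`. -/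
def BoundedFifo (M : MessageSet) (k : ℕ) (τ : Trace) : Prop :=
  Fifo M τ ∧ ∀ τ', τ' <+: τ → ∀ i j,
    (sentOn M i j τ').length ≤ (recvOn M i j τ').length + k

/-- `!?a₁ ⬝ !?a₂ ⋯ !?aₙ` -/
def syncOf (l : List ℕ) : Trace := l.flatMap (fun a => [Act.send a, Act.recv a])

def Synchronous (τ : Trace) : Prop := ∃ l : List ℕ, τ = syncOf l

def CausalEquiv (M : MessageSet) (τ₁ τ₂ : Trace) : Prop :=
  Fifo M τ₁ ∧ Fifo M τ₂ ∧ ∀ i, projPeer M i τ₁ = projPeer M i τ₂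

/-- A system of communicating machines: for each peer `i`, an initial state and
a transition relation (all states are accepting). -/
structure System where
  init : ℕ → ℕ
  delta : ℕ → ℕ → Act → ℕ → Prop

/-- Well-formedness: peer `i` performs only actions of peer `i`, on messages of `M`. -/
def System.WF (S : System) (M : MessageSet) : Prop :=
  ∀ i q α q', S.delta i q α q' → peerOf M α = i ∧ α.msg ∈ M.msgs

/-- The machines are finite-state. -/
def System.FiniteDelta (S : System) : Prop :=
  Set.Finite {x : ℕ × ℕ × Act × ℕ | S.delta x.1 x.2.1 x.2.2.1 x.2.2.2}

/-- A configuration: local states, and one FIFO buffer per channel `(i,j)`. -/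
abbrev Config := (ℕ → ℕ) × (ℕ → ℕ → List ℕ)

def Stable (c : Config) : Prop := ∀ i j, c.2 i j = []

def Step (M : MessageSet) (S : System) (c : Config) : Act → Config → Prop
  | .send a, c' =>
      S.delta (M.src a) (c.1 (M.src a)) (.send a) (c'.1 (M.src a)) ∧
      (∀ k, k ≠ M.src a → c'.1 k = c.1 k) ∧
      c'.2 (M.src a) (M.dst a) = c.2 (M.src a) (M.dst a) ++ [a] ∧
      (∀ k l, ¬(k = M.src a ∧ l = M.dst a) → c'.2 k l = c.2 k l)
  | .recv a, c' =>
      S.delta (M.dst a) (c.1 (M.dst a)) (.recv a) (c'.1 (M.dst a)) ∧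
      (∀ k, k ≠ M.dst a → c'.1 k = c.1 k) ∧
      c.2 (M.src a) (M.dst a) = a :: c'.2 (M.src a) (M.dst a) ∧
      (∀ k l, ¬(k = M.src a ∧ l = M.dst a) → c'.2 k l = c.2 k l)

inductive Exec (M : MessageSet) (S : System) : Config → Trace → Config → Prop
  | refl (c : Config) : Exec M S c [] c
  | step {c c' c'' : Config} {α : Act} {τ : Trace} :
      Step M S c α c' → Exec M S c' τ c'' → Exec M S c (α :: τ) c''

def initConfig (S : System) : Config := (S.init, fun _ _ => [])

def TraceOf (M : MessageSet) (S : System) (τ : Trace) : Prop :=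
  ∃ c, Exec M S (initConfig S) τ c

/-- `Trk M S 0` = synchronous traces; `Trk M S k` (`k ≥ 1`) = `k`-bounded traces. -/
def Trk (M : MessageSet) (S : System) : ℕ → Trace → Prop
  | 0, τ => TraceOf M S τ ∧ Synchronous τ
  | (k+1), τ => TraceOf M S τ ∧ BoundedFifo M (k+1) τ

def Trω (M : MessageSet) (S : System) (τ : Trace) : Prop := ∃ k, Trk M S k τ

/-- Two traces are `S`-equivalent if they lead from the initial configuration to
a common configuration. -/
def SEquiv (M : MessageSet) (S : System) (τ₁ τ₂ : Trace) : Prop :=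
  ∃ c, Exec M S (initConfig S) τ₁ c ∧ Exec M S (initConfig S) τ₂ c

/-- Send-trace language. -/
def STw (M : MessageSet) (S : System) (T : Trace → Prop) : Set (List ℕ) :=
  {w | ∃ τ, T τ ∧ sendProj τ = w}

/-- Send traces enriched with the reached stable configurations. -/
def STc (M : MessageSet) (S : System) (T : Trace → Prop) :
    Set (List ℕ ⊕ List ℕ × Config) :=
  {x | (∃ τ, T τ ∧ x = Sum.inl (sendProj τ)) ∨
       (∃ τ c, T τ ∧ Exec M S (initConfig S) τ c ∧ Stable c ∧
          x = Sum.inr (sendProj τ, c))}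

def kSync (M : MessageSet) (S : System) (k : ℕ) : Prop :=
  STc M S (Trk M S 0) = STc M S (Trk M S k)

def Synchronizable (M : MessageSet) (S : System) : Prop :=
  STc M S (Trk M S 0) = STc M S (Trω M S)

def LangSync (M : MessageSet) (S : System) : Prop :=
  STw M S (Trk M S 0) = STw M S (Trω M S)

inductive Shuffle : List Act → List Act → List Act → Prop
  | nil : Shuffle [] [] []
  | left {u v w : List Act} (a : Act) : Shuffle u v w → Shuffle (a :: u) v (a :: w)
  | right {u v w : List Act} (b : Act) : Shuffle u v w → Shuffle u (b :: v) (b :: w)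

inductive NShuffle : List ℕ → List ℕ → List ℕ → Prop
  | nil : NShuffle [] [] []
  | left {u v w : List ℕ} (a : ℕ) : NShuffle u v w → NShuffle (a :: u) v (a :: w)
  | right {u v w : List ℕ} (b : ℕ) : NShuffle u v w → NShuffle u (b :: v) (b :: w)

inductive PPath (S : System) (i : ℕ) : ℕ → Trace → Prop
  | nil (q : ℕ) : PPath S i q []
  | cons {q q' : ℕ} {α : Act} {w : Trace} :
      S.delta i q α q' → PPath S i q' w → PPath S i q (α :: w)

/-- The language of peer `i` (all states accepting). -/
def Lang (S : System) (i : ℕ) : Set Trace := {w | PPath S i (S.init i) w}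

def prefCl (L : Set Trace) : Set Trace := {w | ∃ v ∈ L, w <+: v}

def OrientedRing (M : MessageSet) : Prop :=
  1 ≤ M.p ∧ ∀ i j, (∃ a ∈ M.msgs, M.src a = i ∧ M.dst a = j) ↔
    (i < M.p ∧ j = (i + 1) % M.p)

/-- a shuffle of !a·?a with !b·?b projects, on every peer, like
one of the two sequential compositions. -/
theorem shuffle_proj_two_messages (M : MessageSet) (a b : ℕ)
    (ha : M.src a ≠ M.dst a) (hb : M.src b ≠ M.dst b)
    (hab : M.src a ≠ M.src b) (i : ℕ) (τ : Trace)
    (h : Shuffle [Act.send a, Act.recv a] [Act.send b, Act.recv b] τ) :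
    projPeer M i τ = projPeer M i (syncOf [a, b]) ∨
    projPeer M i τ = projPeer M i (syncOf [b, a]) := by
  have key : τ = [Act.send a, Act.recv a, Act.send b, Act.recv b] ∨
      τ = [Act.send a, Act.send b, Act.recv a, Act.recv b] ∨
      τ = [Act.send a, Act.send b, Act.recv b, Act.recv a] ∨
      τ = [Act.send b, Act.send a, Act.recv a, Act.recv b] ∨
      τ = [Act.send b, Act.send a, Act.recv b, Act.recv a] ∨
      τ = [Act.send b, Act.recv b, Act.send a, Act.recv a] := by
    cases h with
    | left _ h1 =>
      cases h1 with
      | left _ h2 =>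
        cases h2 with
        | right _ h3 =>
          cases h3 with
          | right _ h4 => cases h4; tauto
      | right _ h2 =>
        cases h2 with
        | left _ h3 =>
          cases h3 with
          | right _ h4 => cases h4; tauto
        | right _ h3 =>
          cases h3 with
          | left _ h4 => cases h4; tauto
    | right _ h1 =>
      cases h1 with
      | left _ h2 =>
        cases h2 with
        | left _ h3 =>
          cases h3 with
          | right _ h4 => cases h4; tauto
        | right _ h3 =>
          cases h3 with
          | left _ h4 => cases h4; tauto
      | right _ h2 =>
        cases h2 with
        | left _ h3 =>
          cases h3 with
          | left _ h4 => cases h4; tauto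
  rcases key with rfl | rfl | rfl | rfl | rfl | rfl <;>
    by_cases h1 : M.src a = i <;> by_cases h2 : M.dst a = i <;>
    by_cases h3 : M.src b = i <;> by_cases h4 : M.dst b = i <;>
    simp_all [projPeer, syncOf, peerOf, List.filter]
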